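/- arXiv:2109.04288 — 4 statements merged into one kernel-verified Lean document; each statement's English description precedes it below -/
import Mathlib

section
/- Fix m₀ ∈ ℕ, m₀ ≥ 1, and set εₙ = n^{−m₀/(2m₀+1)} (log n)^{1/2} and (τ²)* = n^{−1/(2m₀+1)}. Let k ∈ (0,1], let c_λ > 0, and let p_n be the Weibull(k, λ_n) density p_n(τ²) = k λ_n^k (τ²)^{k−1} exp(−(λ_n τ²)^k) with λ_n = c_λ (nεₙ²)^{1/k}/(τ²)*. Then: (a) p_n is monotonically decreasing on (0,∞); (b) there exists c₁ > 0 such that p_n(c₁ (τ²)*) ≥ exp(−nεₙ²) for all sufficiently large n; (c) there exists c₂ > 0 such that ∫_{c₂(τ²)*}^∞ p_n(τ²) dτ² ≤ exp(−5 nεₙ²) for all sufficiently large n. -/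
/-!
The Weibull tail is explicit: `∫_a^∞ p = exp (-(λ a)^k)`. The rate `λₙ = c_λ Aₙ^{1/k} / τₙ`
(with `Aₙ = nεₙ²`, `τₙ = (τ²)*`) is chosen so that `(λₙ · c τₙ)^k = (c c_λ)^k Aₙ`, so at every
point `c τₙ` both the density and the tail are governed by the multiple `(c c_λ)^k` of `Aₙ`:
`c₂ = 5^{1/k}/c_λ` makes the tail exactly `exp(-5Aₙ)`, and for `c₁ ≤ 1/c_λ` the density at
`c₁τₙ` is `k (c₁c_λ)^k Aₙ / (c₁τₙ) · exp(-(c₁c_λ)^k Aₙ) ≥ exp(-Aₙ)` once the prefactor exceeds 1,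
which happens eventually because `c₁τₙ ≤ 1` and `Aₙ ≥ log n → ∞`. Monotonicity holds because
`τ^{k-1}` is nonincreasing for `k ≤ 1`.
-/

open MeasureTheory Real Filter Set Topology

noncomputable def weibullPDF (k lam τ : ℝ) : ℝ :=
  k * lam ^ k * τ ^ (k - 1) * exp (-((lam * τ) ^ k))

section

variable {k lam : ℝ}

lemma weibullPDF_antitoneOn (hk0 : 0 ≤ k) (hk1 : k ≤ 1) (hlam : 0 ≤ lam) :
    AntitoneOn (weibullPDF k lam) (Ioi 0) := by
  intro x (hx : 0 < x) y _ hxy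
  have hpow : y ^ (k - 1) ≤ x ^ (k - 1) := rpow_le_rpow_of_nonpos hx hxy (by linarith)
  have hexp : exp (-((lam * y) ^ k)) ≤ exp (-((lam * x) ^ k)) := by gcongr
  unfold weibullPDF
  gcongr

lemma weibullPDF_eq (hlam : 0 ≤ lam) {x : ℝ} (hx : 0 < x) :
    weibullPDF k lam x = k * (lam * x) ^ k / x * exp (-((lam * x) ^ k)) := by
  rw [weibullPDF, mul_rpow hlam hx.le, rpow_sub hx, rpow_one]
  ring

lemma hasDerivAt_neg_exp_neg_mul_rpow (hlam : 0 < lam) {x : ℝ} (hx : 0 < x) :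
    HasDerivAt (fun τ => -exp (-((lam * τ) ^ k))) (weibullPDF k lam x) x := by
  have hlin : HasDerivAt (fun τ : ℝ => lam * τ) lam x := by
    simpa using (hasDerivAt_id x).const_mul lam
  refine ((hlin.rpow_const (p := k) (Or.inl (mul_pos hlam hx).ne')).neg.exp).neg.congr_deriv ?_
  simp only [Pi.neg_apply]
  rw [weibullPDF_eq hlam.le hx, rpow_sub_one (mul_pos hlam hx).ne']
  field_simp

lemma integral_Ioi_weibullPDF (hk : 0 < k) (hlam : 0 < lam) {a : ℝ} (ha : 0 ≤ a) :
    ∫ τ in Ioi a, weibullPDF k lam τ = exp (-((lam * a) ^ k)) := by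
  have hcont : ContinuousWithinAt (fun τ => -exp (-((lam * τ) ^ k))) (Ici a) a :=
    (((continuousAt_rpow_const _ _ (Or.inr hk.le)).comp
      (continuous_const_mul lam).continuousAt).neg.rexp.neg).continuousWithinAt
  have hlim : Tendsto (fun τ => -exp (-((lam * τ) ^ k))) atTop (𝓝 0) := by
    simpa using (tendsto_exp_neg_atTop_nhds_zero.comp
      ((tendsto_rpow_atTop hk).comp (tendsto_id.const_mul_atTop hlam))).neg
  rw [integral_Ioi_of_hasDerivAt_of_nonneg hcont
    (fun x hx => hasDerivAt_neg_exp_neg_mul_rpow hlam (ha.trans_lt hx))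
    (fun x hx => ?_) hlim]
  · ring
  · have hx : 0 < x := ha.trans_lt hx
    rw [weibullPDF_eq hlam.le hx]
    positivity

end

noncomputable def weibullRate (c k A τ : ℝ) : ℝ := c * A ^ (1 / k) / τ

section

variable {k : ℝ}

lemma weibullRate_nonneg {c A τ : ℝ} (hc : 0 ≤ c) (hA : 0 ≤ A) (hτ : 0 ≤ τ) :
    0 ≤ weibullRate c k A τ := by
  unfold weibullRate; positivity

lemma weibullRate_mul_rpow (hk : k ≠ 0) {c c' A τ : ℝ} (hc : 0 ≤ c) (hc' : 0 ≤ c') (hA : 0 ≤ A)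
    (hτ : τ ≠ 0) : (weibullRate c k A τ * (c' * τ)) ^ k = (c' * c) ^ k * A := by
  rw [weibullRate, show c * A ^ (1 / k) / τ * (c' * τ) = c' * c * A ^ (1 / k) by field_simp,
    mul_rpow (by positivity) (by positivity), ← rpow_mul hA, one_div_mul_cancel hk, rpow_one]

lemma eventually_exp_neg_le_weibullPDF {ι : Type*} {l : Filter ι} {A τ : ι → ℝ} {c : ℝ}
    (hk : 0 < k) (hc : 0 < c) (hA : Tendsto A l atTop) (hτ : ∀ᶠ i in l, τ i ∈ Ioc 0 1) :
    ∀ᶠ i in l, exp (-A i) ≤ weibullPDF k (weibullRate c k (A i) (τ i)) (min 1 c⁻¹ * τ i) := by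
  set c₁ := min 1 c⁻¹
  have hc₁ : 0 < c₁ := lt_min one_pos (inv_pos.2 hc)
  set b := (c₁ * c) ^ k
  have hb0 : 0 < b := rpow_pos_of_pos (mul_pos hc₁ hc) k
  have hb1 : b ≤ 1 := by
    refine rpow_le_one (mul_pos hc₁ hc).le ?_ hk.le
    calc c₁ * c ≤ c⁻¹ * c := by gcongr; exact min_le_right _ _
      _ = 1 := inv_mul_cancel₀ hc.ne'
  filter_upwards [hτ, hA.eventually_ge_atTop (1 / (k * b)), hA.eventually_ge_atTop 0]
    with i ⟨hτ0, hτ1⟩ hAb hA0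
  have hx0 : 0 < c₁ * τ i := mul_pos hc₁ hτ0
  have hx1 : c₁ * τ i ≤ 1 := mul_le_one₀ (min_le_left _ _) hτ0.le hτ1
  have hkbA : 1 ≤ k * (b * A i) := by
    rw [div_le_iff₀ (by positivity)] at hAb
    linarith
  rw [weibullPDF_eq (weibullRate_nonneg hc.le hA0 hτ0.le) hx0,
    weibullRate_mul_rpow hk.ne' hc.le hc₁.le hA0 hτ0.ne']
  calc exp (-A i) = 1 * exp (-A i) := (one_mul _).symm
    _ ≤ k * (b * A i) / (c₁ * τ i) * exp (-(b * A i)) := by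
      gcongr
      · exact hkbA.trans (le_div_self (by positivity) hx0 hx1)
      · exact mul_le_of_le_one_left hA0 hb1

lemma integral_Ioi_weibullPDF_weibullRate (hk : 0 < k) {c b A τ : ℝ} (hc : 0 < c) (hb : 0 < b)
    (hA : 0 < A) (hτ : 0 < τ) :
    ∫ x in Ioi (b ^ (1 / k) / c * τ), weibullPDF k (weibullRate c k A τ) x = exp (-(b * A)) := by
  have hrate : 0 < weibullRate c k A τ := by unfold weibullRate; positivity
  rw [integral_Ioi_weibullPDF hk hrate (by positivity),
    weibullRate_mul_rpow hk.ne' hc.le (by positivity) hA.le hτ.ne', div_mul_cancel₀ _ hc.ne',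
    ← rpow_mul hb.le, one_div_mul_cancel hk.ne', rpow_one]

end

lemma log_le_mul_rpow_mul_sqrt_log_sq {x e : ℝ} (hx : 1 ≤ x) (he : 0 ≤ 1 + 2 * e) :
    log x ≤ x * (x ^ e * √(log x)) ^ 2 := by
  have hx0 : 0 < x := by linarith
  have hpow : x * (x ^ e) ^ 2 = x ^ (1 + 2 * e) := by
    rw [rpow_add hx0, rpow_one, ← rpow_natCast (x ^ e), ← rpow_mul hx0.le]
    norm_num [mul_comm]
  rw [mul_pow, sq_sqrt (log_nonneg hx), ← mul_assoc, hpow]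
  exact le_mul_of_one_le_left (log_nonneg hx) (one_le_rpow hx he)

theorem stmt_13_general (m0 : ℕ) (k c_lam : ℝ)
    (hk0 : 0 < k) (hk1 : k ≤ 1) (hc : 0 < c_lam) :
    let εn : ℕ → ℝ := fun n =>
      (n : ℝ) ^ (-(m0 : ℝ) / (2 * m0 + 1)) * Real.sqrt (Real.log n)
    let τs : ℕ → ℝ := fun n => (n : ℝ) ^ (-(1 : ℝ) / (2 * m0 + 1))
    let lam : ℕ → ℝ := fun n => c_lam * ((n : ℝ) * (εn n) ^ 2) ^ (1 / k) / τs n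
    let pn : ℕ → ℝ → ℝ := fun n τ =>
      k * (lam n) ^ k * τ ^ (k - 1) * Real.exp (-((lam n * τ) ^ k))
    (∀ n : ℕ, AntitoneOn (pn n) (Set.Ioi 0)) ∧
    (∃ c1 : ℝ, 0 < c1 ∧ ∃ N : ℕ, ∀ n ≥ N,
      Real.exp (-((n : ℝ) * (εn n) ^ 2)) ≤ pn n (c1 * τs n)) ∧
    (∃ c2 : ℝ, 0 < c2 ∧ ∃ N : ℕ, ∀ n ≥ N,
      (∫ τ in Set.Ioi (c2 * τs n), pn n τ)
        ≤ Real.exp (-(5 * ((n : ℝ) * (εn n) ^ 2)))) := by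
  intro εn τs lam pn
  have hτs : ∀ n : ℕ, n ≥ 1 → τs n ∈ Ioc 0 1 := fun n hn =>
    ⟨rpow_pos_of_pos (Nat.cast_pos.2 hn) _, rpow_le_one_of_one_le_of_nonpos (by exact_mod_cast hn)
      (div_nonpos_of_nonpos_of_nonneg (by norm_num) (by positivity))⟩
  have hlog_le : ∀ n : ℕ, n ≥ 1 → log n ≤ n * εn n ^ 2 := fun n hn =>
    log_le_mul_rpow_mul_sqrt_log_sq (by exact_mod_cast hn) (by field_simp; linarith)
  have hA : Tendsto (fun n : ℕ => n * εn n ^ 2) atTop atTop :=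
    tendsto_atTop_mono' atTop (eventually_atTop.2 ⟨1, hlog_le⟩)
      (tendsto_log_atTop.comp tendsto_natCast_atTop_atTop)
  refine ⟨fun n => weibullPDF_antitoneOn hk0.le hk1
      (weibullRate_nonneg hc.le (by positivity) (rpow_nonneg n.cast_nonneg _)), ?_, ?_⟩
  · exact ⟨_, lt_min one_pos (inv_pos.2 hc), eventually_atTop.1
      (eventually_exp_neg_le_weibullPDF hk0 hc hA (eventually_atTop.2 ⟨1, hτs⟩))⟩
  · refine ⟨5 ^ (1 / k) / c_lam, by positivity, 2, fun n hn => ?_⟩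
    have hlog : 0 < log n := log_pos (by exact_mod_cast hn)
    exact (integral_Ioi_weibullPDF_weibullRate hk0 hc (by norm_num)
      (hlog.trans_le (hlog_le n (by omega))) (hτs n (by omega)).1).le

/-- The Weibull hyperprior with shape `k ∈ (0,1]` and rate
`λₙ = c_λ (nεₙ²)^{1/k}/(τ²)*` satisfies Assumption A5: (a) its density is
monotonically decreasing on `(0,∞)`; (b) it is sufficiently thick at `c₁(τ²)*`;
(c) its tail mass beyond `c₂(τ²)*` is at most `exp(-5nεₙ²)`, eventually. -/
theorem stmt_13 (m0 : ℕ) (hm0 : 1 ≤ m0) (k c_lam : ℝ)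
    (hk0 : 0 < k) (hk1 : k ≤ 1) (hc : 0 < c_lam) :
    let εn : ℕ → ℝ := fun n =>
      (n : ℝ) ^ (-(m0 : ℝ) / (2 * m0 + 1)) * Real.sqrt (Real.log n)
    let τs : ℕ → ℝ := fun n => (n : ℝ) ^ (-(1 : ℝ) / (2 * m0 + 1))
    let lam : ℕ → ℝ := fun n => c_lam * ((n : ℝ) * (εn n) ^ 2) ^ (1 / k) / τs n
    let pn : ℕ → ℝ → ℝ := fun n τ =>
      k * (lam n) ^ k * τ ^ (k - 1) * Real.exp (-((lam n * τ) ^ k))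
    (∀ n : ℕ, AntitoneOn (pn n) (Set.Ioi 0)) ∧
    (∃ c1 : ℝ, 0 < c1 ∧ ∃ N : ℕ, ∀ n ≥ N,
      Real.exp (-((n : ℝ) * (εn n) ^ 2)) ≤ pn n (c1 * τs n)) ∧
    (∃ c2 : ℝ, 0 < c2 ∧ ∃ N : ℕ, ∀ n ≥ N,
      (∫ τ in Set.Ioi (c2 * τs n), pn n τ)
        ≤ Real.exp (-(5 * ((n : ℝ) * (εn n) ^ 2)))) :=
  stmt_13_general m0 k c_lam hk0 hk1 hc
end

section
/- Fix m₀ ∈ ℕ, m₀ ≥ 1, εₙ = n^{−m₀/(2m₀+1)}(log n)^{1/2} and (τ²)* = n^{−1/(2m₀+1)}. Let α ∈ (0,1] and βₙ = c_β nεₙ²/(τ²)* for some c_β > 0, and let p_n be the Gamma(α, βₙ) density p_n(τ²) = βₙ^α/Γ(α) · (τ²)^{α−1} e^{−βₙ τ²}. Then p_n is decreasing on (0,∞); there exists c₁ > 0 with p_n(c₁(τ²)*) ≥ exp(−nεₙ²) for all large n; and there exists c₂ > 0 with ∫_{c₂(τ²)*}^∞ p_n(τ²)dτ² ≤ exp(−5nεₙ²)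 for all large n. -/
open MeasureTheory Real Set Filter Topology

/-! With `L = nεₙ²`, which tends to infinity, the rate satisfies `βₙ · c(τ²)* = c c_β L`, so at a
fixed multiple `a` of `(τ²)*` everything is governed by `exp(-βₙ a) = exp(-c c_β L)`. For `α ≤ 1`,
`a ≤ 1` and `βₙ a ≥ 1` the factors `βₙ^α` and `a^(α-1)` are at least `1`, which gives the lower
bound; on `[a, ∞)` one has `β^α τ^(α-1) = β (βτ)^(α-1) ≤ β`, so the tail mass is at most
`exp(-βₙ a)/Γ(α)`. Taking `c₁ c_β < 1` and `c₂ c_β = 6 > 5`, the exponential eventually absorbs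
the constant `Γ(α)`. -/

/-- Mathlib's `gammaPDFReal` without the indicator of `[0, ∞)`. -/
noncomputable def gammaDensity (α β τ : ℝ) : ℝ := β ^ α / Gamma α * τ ^ (α - 1) * exp (-(β * τ))

section

variable {α β : ℝ}

lemma antitoneOn_gammaDensity (hα0 : 0 < α) (hα1 : α ≤ 1) (hβ : 0 ≤ β) :
    AntitoneOn (gammaDensity α β) (Ioi 0) := by
  intro x (hx : 0 < x) y _ hxy
  have hΓ := Gamma_pos_of_pos hα0
  have hpow := rpow_le_rpow_of_nonpos hx hxy (by linarith : α - 1 ≤ 0)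
  unfold gammaDensity
  gcongr

lemma exp_neg_mul_div_Gamma_le_gammaDensity {τ : ℝ} (hα0 : 0 < α) (hα1 : α ≤ 1) (hτ : 0 < τ)
    (hτ1 : τ ≤ 1) (hβτ : 1 ≤ β * τ) : exp (-(β * τ)) / Gamma α ≤ gammaDensity α β τ := by
  have hβ : 1 ≤ β := by nlinarith
  have hβα : 1 ≤ β ^ α := one_le_rpow hβ hα0.le
  have hτα : 1 ≤ τ ^ (α - 1) := one_le_rpow_of_pos_of_le_one_of_nonpos hτ hτ1 (by linarith)
  rw [gammaDensity, div_mul_eq_mul_div, div_mul_eq_mul_div,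
    div_le_div_iff_of_pos_right (Gamma_pos_of_pos hα0)]
  calc exp (-(β * τ)) = 1 * 1 * exp (-(β * τ)) := by ring
    _ ≤ β ^ α * τ ^ (α - 1) * exp (-(β * τ)) := by gcongr

lemma gammaDensity_le_of_one_le_mul {τ : ℝ} (hα0 : 0 < α) (hα1 : α ≤ 1) (hτ : 0 < τ)
    (hβτ : 1 ≤ β * τ) : gammaDensity α β τ ≤ β / Gamma α * exp (-β * τ) := by
  have hβ : 0 < β := by nlinarith
  have hβτα : (β * τ) ^ (α - 1) ≤ 1 := rpow_le_one_of_one_le_of_nonpos hβτ (by linarith)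
  have hΓ := Gamma_pos_of_pos hα0
  have hsplit : β ^ α * τ ^ (α - 1) = β * (β * τ) ^ (α - 1) := by
    rw [mul_rpow hβ.le hτ.le, rpow_sub_one hβ.ne']
    field_simp
  rw [gammaDensity, neg_mul, div_mul_eq_mul_div, div_mul_eq_mul_div, div_mul_eq_mul_div, hsplit]
  gcongr
  calc β * (β * τ) ^ (α - 1) ≤ β * 1 := by gcongr
    _ = β := mul_one β

lemma setIntegral_Ioi_gammaDensity_le {a : ℝ} (hα0 : 0 < α) (hα1 : α ≤ 1) (ha : 0 < a)
    (hβa : 1 ≤ β * a) : ∫ τ in Ioi a, gammaDensity α β τ ≤ exp (-(β * a)) / Gamma α := by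
  have hβ : 0 < β := by nlinarith
  have hΓ := Gamma_pos_of_pos hα0
  calc ∫ τ in Ioi a, gammaDensity α β τ ≤ ∫ τ in Ioi a, β / Gamma α * exp (-β * τ) := by
        refine integral_mono_of_nonneg (ae_restrict_of_forall_mem measurableSet_Ioi fun τ hτ => ?_)
          ((integrableOn_exp_mul_Ioi (neg_neg_of_pos hβ) a).const_mul _)
          (ae_restrict_of_forall_mem measurableSet_Ioi fun τ hτ => ?_)
        · have : 0 < τ := ha.trans hτ
          unfold gammaDensity
          positivity
        · exact gammaDensity_le_of_one_le_mul hα0 hα1 (ha.trans hτ)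
            (hβa.trans (by gcongr; exact le_of_lt hτ))
    _ = exp (-(β * a)) / Gamma α := by
        rw [integral_const_mul, integral_exp_mul_Ioi (neg_neg_of_pos hβ), neg_mul]
        field_simp

lemma eventually_exp_neg_mul_le_mul_exp_neg_mul {ι : Type*} {l : Filter ι} {f : ι → ℝ}
    (hf : Tendsto f l atTop) {c c' K : ℝ} (hc : c' < c) (hK : 0 < K) :
    ∀ᶠ i in l, exp (-(c * f i)) ≤ K * exp (-(c' * f i)) := by
  have hsmall : Tendsto (fun i => exp (-((c - c') * f i))) l (𝓝 0) :=
    tendsto_exp_atBot.comp (tendsto_neg_atTop_atBot.comp (hf.const_mul_atTop (sub_pos.2 hc)))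
  filter_upwards [hsmall.eventually (ge_mem_nhds hK)] with i hi
  calc exp (-(c * f i)) = exp (-((c - c') * f i)) * exp (-(c' * f i)) := by
        rw [← exp_add]; ring_nf
    _ ≤ K * exp (-(c' * f i)) := by gcongr

lemma eventually_exp_neg_le_gammaDensity {ι : Type*} {l : Filter ι} {L β a : ι → ℝ} {c : ℝ}
    (hα0 : 0 < α) (hα1 : α ≤ 1) (hL : Tendsto L l atTop) (hc0 : 0 < c) (hc1 : c < 1)
    (ha : ∀ᶠ i in l, 0 < a i ∧ a i ≤ 1) (hβa : ∀ᶠ i in l, β i * a i = c * L i) :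
    ∀ᶠ i in l, exp (-L i) ≤ gammaDensity α (β i) (a i) := by
  filter_upwards [ha, hβa, (hL.const_mul_atTop hc0).eventually_ge_atTop 1,
    eventually_exp_neg_mul_le_mul_exp_neg_mul hL hc1 (inv_pos.2 (Gamma_pos_of_pos hα0))]
    with i ⟨ha0, ha1⟩ hβa hlarge hexp
  calc exp (-L i) = exp (-(1 * L i)) := by rw [one_mul]
    _ ≤ (Gamma α)⁻¹ * exp (-(c * L i)) := hexp
    _ = exp (-(β i * a i)) / Gamma α := by rw [hβa, inv_mul_eq_div]
    _ ≤ gammaDensity α (β i) (a i) :=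
      exp_neg_mul_div_Gamma_le_gammaDensity hα0 hα1 ha0 ha1 (hβa ▸ hlarge)

lemma eventually_setIntegral_Ioi_gammaDensity_le {ι : Type*} {l : Filter ι} {L β a : ι → ℝ}
    {c c' : ℝ} (hα0 : 0 < α) (hα1 : α ≤ 1) (hL : Tendsto L l atTop) (hc : 0 < c) (hc' : c' < c)
    (ha : ∀ᶠ i in l, 0 < a i) (hβa : ∀ᶠ i in l, β i * a i = c * L i) :
    ∀ᶠ i in l, ∫ τ in Ioi (a i), gammaDensity α (β i) τ ≤ exp (-(c' * L i)) := by
  have hΓ := Gamma_pos_of_pos hα0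
  filter_upwards [ha, hβa, (hL.const_mul_atTop hc).eventually_ge_atTop 1,
    eventually_exp_neg_mul_le_mul_exp_neg_mul hL hc' hΓ] with i ha hβa hlarge hexp
  calc ∫ τ in Ioi (a i), gammaDensity α (β i) τ ≤ exp (-(β i * a i)) / Gamma α :=
        setIntegral_Ioi_gammaDensity_le hα0 hα1 ha (hβa ▸ hlarge)
    _ ≤ exp (-(c' * L i)) := by rw [hβa, div_le_iff₀ hΓ, mul_comm _ (Gamma α)]; exact hexp

lemma tendsto_mul_sq_rpow_mul_sqrt_log {m : ℝ} (hm : 0 < 2 * m + 1) :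
    Tendsto (fun x : ℝ => x * (x ^ (-m / (2 * m + 1)) * √(log x)) ^ 2) atTop atTop := by
  have hpow : Tendsto (fun x : ℝ => x ^ (1 / (2 * m + 1))) atTop atTop :=
    tendsto_rpow_atTop (by positivity)
  refine (hpow.atTop_mul_atTop₀ tendsto_log_atTop).congr' ?_
  filter_upwards [eventually_ge_atTop 1] with x hx
  have hx0 : 0 < x := by linarith
  rw [mul_pow, sq_sqrt (log_nonneg hx), ← rpow_natCast, ← rpow_mul hx0.le, ← mul_assoc,
    mul_comm x, ← rpow_add_one hx0.ne']
  congr 2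
  field_simp
  ring

end

theorem stmt_14_general (m0 : ℕ) (α c_β : ℝ)
    (hα0 : 0 < α) (hα1 : α ≤ 1) (hc : 0 < c_β) :
    let εn : ℕ → ℝ := fun n =>
      (n : ℝ) ^ (-(m0 : ℝ) / (2 * m0 + 1)) * Real.sqrt (Real.log n)
    let τs : ℕ → ℝ := fun n => (n : ℝ) ^ (-(1 : ℝ) / (2 * m0 + 1))
    let βn : ℕ → ℝ := fun n => c_β * ((n : ℝ) * (εn n) ^ 2) / τs n
    let pn : ℕ → ℝ → ℝ := fun n τ =>
      (βn n) ^ α / Real.Gamma α * τ ^ (α - 1) * Real.exp (-(βn n * τ))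
    (∀ n : ℕ, AntitoneOn (pn n) (Set.Ioi 0)) ∧
    (∃ c1 : ℝ, 0 < c1 ∧ ∃ N : ℕ, ∀ n ≥ N,
      Real.exp (-((n : ℝ) * (εn n) ^ 2)) ≤ pn n (c1 * τs n)) ∧
    (∃ c2 : ℝ, 0 < c2 ∧ ∃ N : ℕ, ∀ n ≥ N,
      (∫ τ in Set.Ioi (c2 * τs n), pn n τ)
        ≤ Real.exp (-(5 * ((n : ℝ) * (εn n) ^ 2)))) := by
  intro εn τs βn pn
  have hL : Tendsto (fun n : ℕ => (n : ℝ) * εn n ^ 2) atTop atTop :=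
    (tendsto_mul_sq_rpow_mul_sqrt_log (m := m0) (by positivity)).comp tendsto_natCast_atTop_atTop
  have hτs : ∀ᶠ n in atTop, 0 < τs n ∧ τs n ≤ 1 := by
    filter_upwards [eventually_ge_atTop 1] with n hn
    exact ⟨by positivity, rpow_le_one_of_one_le_of_nonpos (by exact_mod_cast hn)
      (div_nonpos_of_nonpos_of_nonneg (by norm_num) (by positivity))⟩
  have hβτs (c : ℝ) : ∀ᶠ n in atTop, βn n * (c * τs n) = c * c_β * ((n : ℝ) * εn n ^ 2) := by
    filter_upwards [hτs] with n ⟨hτ, _⟩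
    simp only [βn]
    field_simp
  set c1 := min 1 (1 / (2 * c_β))
  have hc1 : 0 < c1 := lt_min one_pos (by positivity)
  have hc1β : c1 * c_β < 1 := calc
    c1 * c_β ≤ 1 / (2 * c_β) * c_β := by gcongr; exact min_le_right _ _
    _ < 1 := by field_simp; norm_num
  refine ⟨fun n => antitoneOn_gammaDensity hα0 hα1 (by positivity),
    ⟨c1, hc1, eventually_atTop.mp ?_⟩, ⟨6 / c_β, by positivity, eventually_atTop.mp ?_⟩⟩
  · refine eventually_exp_neg_le_gammaDensity hα0 hα1 hL (mul_pos hc1 hc) hc1β ?_ (hβτs c1)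
    filter_upwards [hτs] with n ⟨hτ0, hτ1⟩
    exact ⟨mul_pos hc1 hτ0, mul_le_one₀ (min_le_left _ _) hτ0.le hτ1⟩
  · refine eventually_setIntegral_Ioi_gammaDensity_le (c := 6) hα0 hα1 hL (by norm_num)
      (by norm_num) ?_ ?_
    · filter_upwards [hτs] with n hτ
      exact mul_pos (by positivity) hτ.1
    · filter_upwards [hβτs (6 / c_β)] with n h
      rw [h]
      field_simp

/-- The Gamma hyperprior with shape `α ∈ (0,1]` and rate `βₙ = c_β nεₙ²/(τ²)*`
satisfies Assumption A5: its density is decreasing on `(0,∞)`, sufficiently thick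
at `c₁(τ²)*`, and has tail mass beyond `c₂(τ²)*` at most `exp(-5nεₙ²)`, eventually. -/
theorem stmt_14 (m0 : ℕ) (hm0 : 1 ≤ m0) (α c_β : ℝ)
    (hα0 : 0 < α) (hα1 : α ≤ 1) (hc : 0 < c_β) :
    let εn : ℕ → ℝ := fun n =>
      (n : ℝ) ^ (-(m0 : ℝ) / (2 * m0 + 1)) * Real.sqrt (Real.log n)
    let τs : ℕ → ℝ := fun n => (n : ℝ) ^ (-(1 : ℝ) / (2 * m0 + 1))
    let βn : ℕ → ℝ := fun n => c_β * ((n : ℝ) * (εn n) ^ 2) / τs n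
    let pn : ℕ → ℝ → ℝ := fun n τ =>
      (βn n) ^ α / Real.Gamma α * τ ^ (α - 1) * Real.exp (-(βn n * τ))
    (∀ n : ℕ, AntitoneOn (pn n) (Set.Ioi 0)) ∧
    (∃ c1 : ℝ, 0 < c1 ∧ ∃ N : ℕ, ∀ n ≥ N,
      Real.exp (-((n : ℝ) * (εn n) ^ 2)) ≤ pn n (c1 * τs n)) ∧
    (∃ c2 : ℝ, 0 < c2 ∧ ∃ N : ℕ, ∀ n ≥ N,
      (∫ τ in Set.Ioi (c2 * τs n), pn n τ)
        ≤ Real.exp (-(5 * ((n : ℝ) * (εn n) ^ 2)))) :=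
  stmt_14_general m0 α c_β hα0 hα1 hc
end

section
/- Let μ = N_d(0, Σ) be a centered Gaussian measure on ℝᵈ with positive definite covariance Σ, and let θ ∈ ℝᵈ and r > 0. Then μ(B(θ, r)) ≥ exp(−θᵀΣ^{−1}θ/2) · μ(B(0, r)), where B(x,r) is the closed Euclidean ball of radius r around x. -/
open MeasureTheory

open scoped ENNReal Pointwise

/-!
For the density `f = exp (-Q / 2)` of a quadratic form `Q`, the parallelogram law
`Q (θ + x) + Q (θ - x) = 2 Q x + 2 Q θ` and convexity of `exp` give the pointwise bound
`exp (-Q θ / 2) f x ≤ (f (θ + x) + f (θ - x)) / 2`. Integrate it over the symmetric ball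
`B(0, r)`: by translation and reflection invariance of Lebesgue measure, both `f (θ + ·)` and
`f (θ - ·)` integrate there to the `f`-mass of `B(θ, r)`.
-/

section Symmetrization

variable {G : Type*} [AddCommGroup G] [MeasurableSpace G] [MeasurableAdd G]
  {μ : Measure G} [μ.IsAddLeftInvariant]

theorem setLIntegral_vadd_eq (f : G → ℝ≥0∞) (θ : G) (s : Set G) :
    ∫⁻ x in θ +ᵥ s, f x ∂μ = ∫⁻ x in s, f (θ + x) ∂μ := by
  have hpre : (θ + ·) ⁻¹' (θ +ᵥ s) = s := by
    change (θ +ᵥ ·) ⁻¹' (θ +ᵥ s) = s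
    rw [Set.preimage_vadd, neg_vadd_vadd]
  rw [← (measurePreserving_add_left μ θ).setLIntegral_comp_preimage_emb
    (measurableEmbedding_addLeft θ) f, hpre]

theorem setLIntegral_sub_eq_vadd_of_neg_eq [MeasurableNeg G] [μ.IsNegInvariant]
    (f : G → ℝ≥0∞) (θ : G) {s : Set G} (hs : -s = s) :
    ∫⁻ x in s, f (θ - x) ∂μ = ∫⁻ x in θ +ᵥ s, f x ∂μ := by
  have hpre : (θ - ·) ⁻¹' (θ +ᵥ s) = s := by
    ext x
    rw [Set.mem_preimage, Set.mem_vadd_set_iff_neg_vadd_mem, vadd_eq_add, sub_eq_add_neg,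
      neg_add_cancel_left, ← Set.mem_neg, hs]
  rw [← (Measure.measurePreserving_sub_left μ θ).setLIntegral_comp_preimage_emb
    (MeasurableEquiv.subLeft θ).measurableEmbedding f, hpre]

theorem mul_setLIntegral_le_setLIntegral_vadd [MeasurableNeg G] [μ.IsNegInvariant]
    {f : G → ℝ≥0∞} (hf : Measurable f) {s : Set G} (hs : -s = s) {c : ℝ≥0∞} (θ : G)
    (h : ∀ x, 2 * (c * f x) ≤ f (θ + x) + f (θ - x)) :
    c * ∫⁻ x in s, f x ∂μ ≤ ∫⁻ x in θ +ᵥ s, f x ∂μ := by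
  have h2 : 2 * (c * ∫⁻ x in s, f x ∂μ) ≤ 2 * ∫⁻ x in θ +ᵥ s, f x ∂μ := by
    calc 2 * (c * ∫⁻ x in s, f x ∂μ)
        = ∫⁻ x in s, 2 * (c * f x) ∂μ := by
          rw [lintegral_const_mul' _ _ ENNReal.ofNat_ne_top, lintegral_const_mul _ hf]
      _ ≤ ∫⁻ x in s, (f (θ + x) + f (θ - x)) ∂μ := lintegral_mono h
      _ = ∫⁻ x in s, f (θ + x) ∂μ + ∫⁻ x in s, f (θ - x) ∂μ :=
          lintegral_add_left (hf.comp (measurable_const_add θ)) _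
      _ = 2 * ∫⁻ x in θ +ᵥ s, f x ∂μ := by
          rw [setLIntegral_sub_eq_vadd_of_neg_eq f θ hs, setLIntegral_vadd_eq, two_mul]
  exact (ENNReal.mul_le_mul_iff_right two_ne_zero ENNReal.ofNat_ne_top).mp h2

end Symmetrization

theorem two_mul_exp_add_div_two_le (u v : ℝ) :
    2 * Real.exp ((u + v) / 2) ≤ Real.exp u + Real.exp v := by
  have h := convexOn_exp.2 (Set.mem_univ u) (Set.mem_univ v) (by norm_num : (0 : ℝ) ≤ 1 / 2)
    (by norm_num : (0 : ℝ) ≤ 1 / 2) (by norm_num)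
  simp only [smul_eq_mul] at h
  rw [show (u + v) / 2 = 1 / 2 * u + 1 / 2 * v by ring]
  linarith

section GaussianShift

variable {E : Type*} [AddCommGroup E] [MeasurableSpace E] [MeasurableAdd E] [MeasurableNeg E]
  {μ : Measure E} [μ.IsAddLeftInvariant] [μ.IsNegInvariant]

theorem ofReal_exp_mul_withDensity_le_withDensity_vadd {Q : E → ℝ} (hQ : Measurable Q) (θ : E)
    (hpar : ∀ x, Q (θ + x) + Q (θ - x) = 2 * Q x + 2 * Q θ) {s : Set E} (hs : MeasurableSet s)
    (hsymm : -s = s) :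
    ENNReal.ofReal (Real.exp (-Q θ / 2)) *
        μ.withDensity (fun x => ENNReal.ofReal (Real.exp (-Q x / 2))) s ≤
      μ.withDensity (fun x => ENNReal.ofReal (Real.exp (-Q x / 2))) (θ +ᵥ s) := by
  rw [withDensity_apply _ hs, withDensity_apply _ (hs.const_vadd θ)]
  refine mul_setLIntegral_le_setLIntegral_vadd (by fun_prop) hsymm θ fun x => ?_
  have hexp : 2 * (Real.exp (-Q θ / 2) * Real.exp (-Q x / 2)) ≤
      Real.exp (-Q (θ + x) / 2) + Real.exp (-Q (θ - x) / 2) := by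
    rw [← Real.exp_add, show -Q θ / 2 + -Q x / 2 = (-Q (θ + x) / 2 + -Q (θ - x) / 2) / 2 by
      linarith [hpar x]]
    exact two_mul_exp_add_div_two_le _ _
  rw [← ENNReal.ofReal_mul (Real.exp_nonneg _), ← ENNReal.ofReal_ofNat 2,
    ← ENNReal.ofReal_mul zero_le_two, ← ENNReal.ofReal_add (Real.exp_nonneg _)
      (Real.exp_nonneg _)]
  exact ENNReal.ofReal_le_ofReal hexp

end GaussianShift

theorem Matrix.sum_sum_add_mul_add_sum_sum_sub_mul_sub {ι R : Type*} [Fintype ι] [CommRing R]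
    (A : Matrix ι ι R) (x y : ι → R) :
    ∑ i, ∑ j, (y + x) i * A i j * (y + x) j + ∑ i, ∑ j, (y - x) i * A i j * (y - x) j =
      2 * ∑ i, ∑ j, x i * A i j * x j + 2 * ∑ i, ∑ j, y i * A i j * y j := by
  simp only [Finset.mul_sum, ← Finset.sum_add_distrib, Pi.add_apply, Pi.sub_apply]
  refine Finset.sum_congr rfl fun i _ => Finset.sum_congr rfl fun j _ => ?_
  ring

theorem stmt_16_general (d : ℕ) (S : Matrix (Fin d) (Fin d) ℝ)
    (θ : EuclideanSpace ℝ (Fin d)) (r : ℝ) :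
    let Q : EuclideanSpace ℝ (Fin d) → ℝ := fun x => ∑ i, ∑ j, x i * S⁻¹ i j * x j
    let μ : Measure (EuclideanSpace ℝ (Fin d)) :=
      volume.withDensity fun x => ENNReal.ofReal (Real.exp (-(Q x) / 2))
    ENNReal.ofReal (Real.exp (-(Q θ) / 2)) * μ (Metric.closedBall 0 r)
      ≤ μ (Metric.closedBall θ r) := by
  intro Q μ
  have hQ : Measurable Q := by fun_prop
  have hpar (x : EuclideanSpace ℝ (Fin d)) : Q (θ + x) + Q (θ - x) = 2 * Q x + 2 * Q θ := by
    simp only [Q, WithLp.ofLp_add, WithLp.ofLp_sub]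
    exact S⁻¹.sum_sum_add_mul_add_sum_sum_sub_mul_sub x.ofLp θ.ofLp
  have h := ofReal_exp_mul_withDensity_le_withDensity_vadd (μ := volume) hQ θ hpar
    Metric.isClosed_closedBall.measurableSet (s := Metric.closedBall 0 r)
    (by rw [neg_closedBall, neg_zero])
  rwa [vadd_closedBall_zero] at h

/-- Shifted-ball lower bound for a centered Gaussian measure `N_d(0, Σ)` (given by
its density `∝ exp(-xᵀΣ⁻¹x/2)` w.r.t. Lebesgue measure on Euclidean space):
`μ(B(θ,r)) ≥ exp(-θᵀΣ⁻¹θ/2) · μ(B(0,r))`. -/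
theorem stmt_16 (d : ℕ) (S : Matrix (Fin d) (Fin d) ℝ) (hS : S.PosDef)
    (θ : EuclideanSpace ℝ (Fin d)) (r : ℝ) (hr : 0 < r) :
    let Q : EuclideanSpace ℝ (Fin d) → ℝ := fun x => ∑ i, ∑ j, x i * S⁻¹ i j * x j
    let μ : Measure (EuclideanSpace ℝ (Fin d)) :=
      volume.withDensity fun x => ENNReal.ofReal (Real.exp (-(Q x) / 2))
    ENNReal.ofReal (Real.exp (-(Q θ) / 2)) * μ (Metric.closedBall 0 r)
      ≤ μ (Metric.closedBall θ r) :=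
  stmt_16_general d S θ r
end

section
/- Let B be an n×d matrix of rank d, let R be symmetric positive semidefinite d×d with kernel K of dimension q ≥ 1, and suppose X is an n×q matrix with column span equal to {Bv : v ∈ K} and full column rank. Let H = X(XᵀX)^{−1}Xᵀ. Then for every τ² > 0 and τ²_poly > 0 the matrix R/τ² + BᵀHB/(nτ²_poly) is symmetric positive definite; hence the proper conditional O-splines prior N_d(0, (R/τ² + BᵀHB/(nτ²_poly))^{−1}) is a well-defined nondegenerate Gaussian distribution. -/
/-!
On `ker R` the penalty `R` vanishes, so positive definiteness of the sum comes down to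
`xᵀ Bᵀ H B x > 0` for `0 ≠ x ∈ ker R`. For such `x`, `Bx` lies in the column span of `X`, where
the hat matrix `H` acts as the identity; hence `xᵀ Bᵀ H B x = ‖Bx‖² > 0` since `B` is injective.
-/

open Matrix

namespace Matrix

variable {m n p : Type*} [Fintype n]

theorem mulVec_injective_of_rank_eq_card {K : Type*} [Field K] {A : Matrix m n K}
    (hA : A.rank = Fintype.card n) : Function.Injective A.mulVec := by
  have h := LinearMap.finrank_range_add_finrank_ker A.mulVecLin
  rw [← rank, hA, Module.finrank_fintype_fun_eq_card, add_eq_left] at h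
  exact LinearMap.ker_eq_bot.mp (Submodule.finrank_eq_zero.mp h)

theorem PosDef.add_of_forall_mulVec_eq_zero {R S : Matrix n n ℝ}
    (hR : R.PosSemidef) (hS : S.PosSemidef) (h : ∀ x ≠ 0, R *ᵥ x = 0 → 0 < x ⬝ᵥ S *ᵥ x) :
    (R + S).PosDef := by
  refine .of_dotProduct_mulVec_pos (hR.1.add hS.1) fun x hx => ?_
  rw [add_mulVec, dotProduct_add]
  have hS0 := hS.dotProduct_mulVec_nonneg x
  by_cases hRx : R *ᵥ x = 0
  · simpa [hRx] using h x hx hRx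
  · have hR0 : 0 < star x ⬝ᵥ R *ᵥ x :=
      (hR.dotProduct_mulVec_nonneg x).lt_of_ne' ((hR.dotProduct_mulVec_zero_iff x).not.mpr hRx)
    positivity

variable [Fintype m]

noncomputable def hatMatrix [DecidableEq n] (X : Matrix m n ℝ) : Matrix m m ℝ :=
  X * (Xᵀ * X)⁻¹ * Xᵀ

variable [DecidableEq n] {X : Matrix m n ℝ}

theorem posSemidef_hatMatrix (X : Matrix m n ℝ) : (hatMatrix X).PosSemidef := by
  simpa [hatMatrix, Matrix.mul_assoc] using
    (posSemidef_conjTranspose_mul_self X).inv.mul_mul_conjTranspose_same X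

theorem hatMatrix_mul_self (hX : Function.Injective X.mulVec) : hatMatrix X * X = X := by
  have hXX : IsUnit (Xᵀ * X).det :=
    (isUnit_iff_isUnit_det _).mp (by simpa using (PosDef.conjTranspose_mul_self X hX).isUnit)
  rw [hatMatrix, Matrix.mul_assoc _ Xᵀ, nonsing_inv_mul_cancel_right _ _ hXX]

theorem hatMatrix_mulVec_of_mem_range (hX : Function.Injective X.mulVec) {v : m → ℝ}
    (hv : v ∈ LinearMap.range X.mulVecLin) : hatMatrix X *ᵥ v = v := by
  obtain ⟨w, rfl⟩ := hv
  simp [mulVec_mulVec, hatMatrix_mul_self hX]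

theorem dotProduct_transpose_mul_hatMatrix_mul_mulVec [Fintype p]
    (hX : Function.Injective X.mulVec) {B : Matrix m p ℝ} {x : p → ℝ}
    (hBx : B *ᵥ x ∈ LinearMap.range X.mulVecLin) :
    x ⬝ᵥ (Bᵀ * hatMatrix X * B) *ᵥ x = B *ᵥ x ⬝ᵥ B *ᵥ x := by
  rw [← mulVec_mulVec, ← mulVec_mulVec, hatMatrix_mulVec_of_mem_range hX hBx, dotProduct_mulVec,
    vecMul_transpose]

end Matrix

theorem stmt_17_general (n d q : ℕ)
    (B : Matrix (Fin n) (Fin d) ℝ) (hB : B.rank = d)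
    (R : Matrix (Fin d) (Fin d) ℝ) (hR : R.PosSemidef)
    (X : Matrix (Fin n) (Fin q) ℝ) (hX : X.rank = q)
    (hspan : Submodule.span ℝ (Set.range fun j => fun i => X i j)
      = Submodule.map B.mulVecLin (LinearMap.ker R.mulVecLin))
    (τ2 τp : ℝ) (hτ : 0 < τ2) (hτp : 0 < τp) :
    let H : Matrix (Fin n) (Fin n) ℝ := X * (Xᵀ * X)⁻¹ * Xᵀ
    ((1 / τ2) • R + (1 / ((n : ℝ) * τp)) • (Bᵀ * H * B)).PosDef := by
  show ((1 / τ2) • R + (1 / ((n : ℝ) * τp)) • (Bᵀ * hatMatrix X * B)).PosDef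
  have hXinj : Function.Injective X.mulVec := mulVec_injective_of_rank_eq_card (by simpa using hX)
  have hBinj : Function.Injective B.mulVec := mulVec_injective_of_rank_eq_card (by simpa using hB)
  have hcols : LinearMap.range X.mulVecLin =
      Submodule.map B.mulVecLin (LinearMap.ker R.mulVecLin) := by
    rw [range_mulVecLin]
    exact hspan
  have hBHB : (Bᵀ * hatMatrix X * B).PosSemidef := by
    simpa using (posSemidef_hatMatrix X).conjTranspose_mul_mul_same B
  refine PosDef.add_of_forall_mulVec_eq_zero (hR.smul (by positivity)) (hBHB.smul (by positivity))
    fun x hx hRx => ?_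
  have hBx : B *ᵥ x ≠ 0 := fun h => hx (hBinj (h.trans (mulVec_zero B).symm))
  -- rules out the junk value `1 / (0 * τp) = 0` of the polynomial penalty weight
  have hn : (0 : ℝ) < n := Nat.cast_pos.mpr <| Nat.pos_of_ne_zero <| by
    rintro rfl
    exact hBx (Subsingleton.elim _ _)
  have hker : R *ᵥ x = 0 := by
    rwa [smul_mulVec, smul_eq_zero_iff_right (by positivity)] at hRx
  have hmem : B *ᵥ x ∈ LinearMap.range X.mulVecLin := hcols ▸ ⟨x, hker, rfl⟩
  rw [smul_mulVec, dotProduct_smul, dotProduct_transpose_mul_hatMatrix_mul_mulVec hXinj hmem]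
  exact mul_pos (by positivity) (by simpa using dotProduct_self_star_pos_iff.mpr hBx)

/-- Propriety of the proper conditional O-splines prior: if `B` has rank `d`, `R`
is symmetric positive semidefinite with kernel `K` of dimension `q ≥ 1`, and `X`
has full column rank `q` with column span `{Bv : v ∈ K}`, then for all
`τ², τ²_poly > 0` the precision matrix `R/τ² + BᵀHB/(nτ²_poly)` with
`H = X(XᵀX)⁻¹Xᵀ` is positive definite. -/
theorem stmt_17 (n d q : ℕ) (hq : 1 ≤ q)
    (B : Matrix (Fin n) (Fin d) ℝ) (hB : B.rank = d)
    (R : Matrix (Fin d) (Fin d) ℝ) (hR : R.PosSemidef)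
    (hker : Module.finrank ℝ (LinearMap.ker R.mulVecLin) = q)
    (X : Matrix (Fin n) (Fin q) ℝ) (hX : X.rank = q)
    (hspan : Submodule.span ℝ (Set.range fun j => fun i => X i j)
      = Submodule.map B.mulVecLin (LinearMap.ker R.mulVecLin))
    (τ2 τp : ℝ) (hτ : 0 < τ2) (hτp : 0 < τp) :
    let H : Matrix (Fin n) (Fin n) ℝ := X * (Xᵀ * X)⁻¹ * Xᵀ
    ((1 / τ2) • R + (1 / ((n : ℝ) * τp)) • (Bᵀ * H * B)).PosDef :=
  stmt_17_general n d q B hB R hR X hX hspan τ2 τp hτ hτp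
end
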